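/- arXiv:1909.06065 — 5 statements merged into one kernel-verified Lean document; each statement's English description precedes it below -/
import Mathlib

section
/- Let $x \in \mathbb{R}^n$ and $\lambda > 0$ with $\|x\|_\infty > \lambda$. Define the soft-thresholding $z \in \mathbb{R}^n$ by $z_i = 0$ if $|x_i| \le \lambda$, $z_i = x_i - \lambda$ if $x_i > \lambda$, and $z_i = x_i + \lambda$ if $x_i < -\lambda$. Then $z \ne 0$ and $y_* = z/\|z\|_2$ is a global minimizer of $-\frac{1}{\lambda} y^T x + \|y\|_1$ over the unit sphere $\mathbb{S}^{n-1}$. -/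
/-! The soft-thresholding `z` of `x` satisfies the optimality conditions of the `ℓ¹`-proximal
problem: `zᵢ (xᵢ - zᵢ) = λ|zᵢ|` and `|xᵢ - zᵢ| ≤ λ`. The second gives `⟨y, x⟩ ≤ ⟨y, z⟩ + λ‖y‖₁`
for every `y`, so on the unit sphere the objective is at least `-⟨y, z⟩/λ ≥ -‖z‖₂/λ` by
Cauchy–Schwarz; the first shows that `z/‖z‖₂` attains `-‖z‖₂/λ`. -/

open Finset

noncomputable def softThreshold (lam t : ℝ) : ℝ :=
  if |t| ≤ lam then 0 else if lam < t then t - lam else t + lam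

theorem softThreshold_mul_sub_self (lam t : ℝ) :
    softThreshold lam t * (t - softThreshold lam t) = lam * |softThreshold lam t| := by
  unfold softThreshold
  split_ifs with hle hlt
  · simp
  · rw [abs_of_pos (sub_pos.mpr hlt)]; ring
  · have hneg : t + lam < 0 := by
      cases abs_cases t <;> cases abs_cases lam <;> linarith
    rw [abs_of_neg hneg]; ring

theorem abs_sub_softThreshold_le {lam : ℝ} (hlam : 0 ≤ lam) (t : ℝ) :
    |t - softThreshold lam t| ≤ lam := by
  unfold softThreshold
  split_ifs with hle hlt
  · simpa using hle
  · simp [abs_of_nonneg hlam]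
  · simp [abs_of_nonneg hlam]

theorem softThreshold_ne_zero {lam t : ℝ} (h : lam < |t|) : softThreshold lam t ≠ 0 := by
  unfold softThreshold
  split_ifs with hle hlt
  · exact absurd hle (not_le.mpr h)
  · exact sub_ne_zero.mpr hlt.ne'
  · cases abs_cases t <;> intro <;> linarith

variable {ι : Type*} [Fintype ι]

theorem sum_sq_pos_of_ne_zero {z : ι → ℝ} (hz : z ≠ 0) : 0 < ∑ i, z i ^ 2 := by
  refine (Fintype.sum_nonneg fun i => sq_nonneg (z i)).lt_of_ne' fun h => hz ?_
  funext i
  exact pow_eq_zero_iff two_ne_zero |>.mp <|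
    congrFun ((Fintype.sum_eq_zero_iff_of_nonneg fun j => sq_nonneg (z j)).mp h) i

theorem sum_sq_div_sqrt_sum_sq {z : ι → ℝ} (hz : z ≠ 0) :
    ∑ i, (z i / √(∑ j, z j ^ 2)) ^ 2 = 1 := by
  have hS := sum_sq_pos_of_ne_zero hz
  simp only [div_pow, ← sum_div, Real.sq_sqrt hS.le]
  exact div_self hS.ne'

theorem sum_mul_le_sum_mul_add_of_abs_sub_le {x z : ι → ℝ} {lam : ℝ}
    (h : ∀ i, |x i - z i| ≤ lam) (y : ι → ℝ) :
    ∑ i, y i * x i ≤ ∑ i, y i * z i + lam * ∑ i, |y i| := by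
  rw [mul_sum, ← sum_add_distrib]
  refine sum_le_sum fun i _ => ?_
  have : y i * (x i - z i) ≤ |y i| * lam := (le_abs_self _).trans <| by
    rw [abs_mul]; exact mul_le_mul_of_nonneg_left (h i) (abs_nonneg _)
  linarith

theorem neg_sqrt_sum_sq_div_le {x z y : ι → ℝ} {lam : ℝ} (hlam : 0 < lam)
    (h : ∀ i, |x i - z i| ≤ lam) (hy : ∑ i, y i ^ 2 = 1) :
    -(√(∑ i, z i ^ 2) / lam) ≤ -(1 / lam) * ∑ i, y i * x i + ∑ i, |y i| := by
  have hcs : ∑ i, y i * z i ≤ √(∑ i, z i ^ 2) := by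
    simpa [hy] using Real.sum_mul_le_sqrt_mul_sqrt univ y z
  have hx : (1 / lam) * ∑ i, y i * x i ≤ (1 / lam) * (√(∑ i, z i ^ 2) + lam * ∑ i, |y i|) :=
    mul_le_mul_of_nonneg_left
      ((sum_mul_le_sum_mul_add_of_abs_sub_le h y).trans (by linarith)) (by positivity)
  have hsplit : (1 / lam) * (√(∑ i, z i ^ 2) + lam * ∑ i, |y i|) =
      √(∑ i, z i ^ 2) / lam + ∑ i, |y i| := by
    field_simp
  linarith

theorem objective_div_sqrt_sum_sq {x z : ι → ℝ} {lam : ℝ} (hlam : lam ≠ 0)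
    (h : ∀ i, z i * (x i - z i) = lam * |z i|) (hz : z ≠ 0) :
    -(1 / lam) * ∑ i, z i / √(∑ j, z j ^ 2) * x i + ∑ i, |z i / √(∑ j, z j ^ 2)| =
      -(√(∑ j, z j ^ 2) / lam) := by
  have hS := sum_sq_pos_of_ne_zero hz
  set s := √(∑ j, z j ^ 2) with hs_def
  have hs : 0 < s := Real.sqrt_pos.mpr hS
  have hzx : ∑ i, z i * x i = s ^ 2 + lam * ∑ i, |z i| := by
    rw [hs_def, Real.sq_sqrt hS.le, mul_sum, ← sum_add_distrib]
    exact sum_congr rfl fun i _ => by linarith [h i]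
  simp only [div_mul_eq_mul_div, ← sum_div, abs_div, abs_of_pos hs, hzx]
  field_simp
  ring

/-- if `‖x‖_∞ > λ`, the soft-thresholding `z` is nonzero and `z/‖z‖₂` is a
global minimizer of `-(1/λ)yᵀx + ‖y‖₁` over the unit sphere. -/
theorem stmt2 (n : ℕ) (x : Fin n → ℝ) (lam : ℝ) (hlam : 0 < lam)
    (hinf : ∃ i, lam < |x i|) :
    let z : Fin n → ℝ :=
      fun i => if |x i| ≤ lam then 0 else if lam < x i then x i - lam else x i + lam
    let ystar : Fin n → ℝ := fun i => z i / Real.sqrt (∑ j, (z j) ^ 2)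
    z ≠ 0 ∧ (∑ i, (ystar i) ^ 2) = 1 ∧
      ∀ y : Fin n → ℝ, (∑ i, (y i) ^ 2) = 1 →
        -(1 / lam) * (∑ i, ystar i * x i) + ∑ i, |ystar i| ≤
          -(1 / lam) * (∑ i, y i * x i) + ∑ i, |y i| := by
  intro z ystar
  obtain ⟨i, hi⟩ := hinf
  have hz : z ≠ 0 := fun h => softThreshold_ne_zero hi (congrFun h i)
  refine ⟨hz, sum_sq_div_sqrt_sum_sq hz, fun y hy => ?_⟩
  calc -(1 / lam) * (∑ i, ystar i * x i) + ∑ i, |ystar i| = -(√(∑ j, z j ^ 2) / lam) :=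
        objective_div_sqrt_sum_sq hlam.ne' (fun i => softThreshold_mul_sub_self lam (x i)) hz
    _ ≤ _ := neg_sqrt_sum_sq_div_le hlam (fun i => abs_sub_softThreshold_le hlam.le (x i)) hy
end

section
/- (Sufficient decrease for the Riemannian proximal gradient iteration.) Let $\mathcal{M}$ be a Riemannian manifold with retraction $R$, let $g: \mathcal{M} \to \mathbb{R}$, and let $f: \mathcal{M} \to \mathbb{R}$ be differentiable with the property that $f(R_x(\eta)) \le f(x) + \langle \mathrm{grad} f(x), \eta \rangle_x + \frac{L}{2}\|\eta\|_x^2$ for all $x$ in the sublevel set $\Omega_{x_0}$ and all relevant $\eta \in T_x\mathcal{M}$. Fix $\tilde L > L$, and at each iterate $x_k$ let $\eta_{x_k}^* \in T_{x_k}\mathcal{M}$ satisfy $\ell_{x_k}(\eta_{x_k}^*) \le \ell_{x_k}(0)$, where $\ell_{x_k}(\eta) = \langle \mathrm{grad} f(x_k), \eta \rangle_{x_k} + \frac{\tilde L}{2}\|\eta\|_{x_k}^2 + g(R_{x_k}(\eta))$, and set $x_{k+1} = R_{x_k}(\eta_{x_k}^*)$. Then $F(x_k) - F(x_{k+1}) \ge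 \frac{\tilde L - L}{2} \|\eta_{x_k}^*\|_{x_k}^2$, where $F = f + g$. -/
open scoped RealInnerProductSpace

/-!
Subtracting the `L`-smoothness upper bound for `f (R x η)` from the model decrease
`ℓ_x(η) ≤ ℓ_x(0) = g x` leaves `(L̃ - L)/2 ‖η‖² ≤ F x - F (R x η)`, provided `x` lies in the
sublevel set `Ω_{x₀}` where the smoothness bound holds. This decrease is nonnegative, so by
induction every iterate stays in `Ω_{x₀}`.
-/

theorem sufficient_decrease_of_model_decrease {E M : Type*} [NormedAddCommGroup E]
    [InnerProductSpace ℝ E] {f g : M → ℝ} {x y : M} {v η : E} {L Ltil : ℝ}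
    (hf : f y ≤ f x + ⟪v, η⟫ + L / 2 * ‖η‖ ^ 2)
    (hmodel : ⟪v, η⟫ + Ltil / 2 * ‖η‖ ^ 2 + g y ≤ g x) :
    (Ltil - L) / 2 * ‖η‖ ^ 2 ≤ (f x + g x) - (f y + g y) := by
  linarith

theorem apply_le_apply_zero_of_succ_le_of_le_apply_zero {α : Type*} [Preorder α] {u : ℕ → α}
    (hstep : ∀ k, u k ≤ u 0 → u (k + 1) ≤ u k) : ∀ k, u k ≤ u 0
  | 0 => le_rfl
  | k + 1 => (hstep k (apply_le_apply_zero_of_succ_le_of_le_apply_zero hstep k)).trans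
      (apply_le_apply_zero_of_succ_le_of_le_apply_zero hstep k)

/-- sufficient decrease of the Riemannian proximal gradient iteration:
if `f` is `L`-retraction-smooth on the sublevel set `Ω_{x₀} = {x | F x ≤ F x₀}`,
`L̃ > L`, each `η_k` satisfies `ℓ_{x_k}(η_k) ≤ ℓ_{x_k}(0)` and `x_{k+1} = R_{x_k}(η_k)`,
then `F(x_k) - F(x_{k+1}) ≥ (L̃ - L)/2 ⬝ ‖η_k‖²`. -/
theorem stmt4 (M : Type*) (T : M → Type*)
    [∀ x, NormedAddCommGroup (T x)] [∀ x, InnerProductSpace ℝ (T x)]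
    (R : (x : M) → T x → M) (hR0 : ∀ x : M, R x 0 = x)
    (f g : M → ℝ) (gradf : (x : M) → T x)
    (L Ltil : ℝ) (hL : L < Ltil)
    (x0 : M)
    (hsmooth : ∀ x : M, f x + g x ≤ f x0 + g x0 → ∀ η : T x,
      f (R x η) ≤ f x + ⟪gradf x, η⟫ + L / 2 * ‖η‖ ^ 2)
    (x : ℕ → M) (hx0 : x 0 = x0)
    (η : (k : ℕ) → T (x k))
    (hη : ∀ k, ⟪gradf (x k), η k⟫ + Ltil / 2 * ‖η k‖ ^ 2 + g (R (x k) (η k))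
        ≤ ⟪gradf (x k), (0 : T (x k))⟫ + Ltil / 2 * ‖(0 : T (x k))‖ ^ 2 + g (R (x k) 0))
    (hstep : ∀ k, x (k + 1) = R (x k) (η k)) :
    ∀ k, (Ltil - L) / 2 * ‖η k‖ ^ 2 ≤ (f (x k) + g (x k)) - (f (x (k + 1)) + g (x (k + 1))) := by
  have decrease : ∀ k, f (x k) + g (x k) ≤ f (x 0) + g (x 0) →
      (Ltil - L) / 2 * ‖η k‖ ^ 2 ≤ (f (x k) + g (x k)) - (f (x (k + 1)) + g (x (k + 1))) := by
    intro k hk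
    have hmodel := hη k
    simp only [inner_zero_right, norm_zero, hR0] at hmodel
    rw [hstep k]
    refine sufficient_decrease_of_model_decrease (hsmooth _ (hx0 ▸ hk) _) ?_
    linarith
  have sublevel : ∀ k, f (x k) + g (x k) ≤ f (x 0) + g (x 0) :=
    apply_le_apply_zero_of_succ_le_of_le_apply_zero fun k hk => by
      have hdecrease := decrease k hk
      have hnonneg : 0 ≤ (Ltil - L) / 2 * ‖η k‖ ^ 2 :=
        mul_nonneg (div_nonneg (sub_nonneg.2 hL.le) zero_le_two) (sq_nonneg _)
      linarith
  exact fun k => decrease k (sublevel k)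
end

section
/- (Key descent comparison lemma, Euclidean specialization.) Let $f, g: \mathbb{R}^n \to \mathbb{R}$ with $f$ differentiable, $f$ convex, $g$ convex, and $f$ satisfying $f(x + \eta) \le f(x) + \langle \nabla f(x), \eta \rangle + \frac{L}{2}\|\eta\|^2$ for all $x, \eta$. Fix $\tilde L \ge L$ and $x \in \mathbb{R}^n$, and let $\eta^*$ be a minimizer of $\ell(\eta) = \langle \nabla f(x), \eta \rangle + \frac{\tilde L}{2}\|\eta\|^2 + g(x + \eta)$. Set $z = x + \eta^*$. Then for every $y = x + \xi$, $F(z) \le F(y) + \frac{\tilde L}{2}(\|\xi\|^2 - \|\xi - \eta^*\|^2)$, where $F = f + g$. -/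
/-!
The map `h η = ⟪∇f x, η⟫ + g (x + η)` is convex and `η*` minimizes `h + (L̃/2)‖·‖²`; comparing `η*`
with `η* + t (ξ - η*)` and letting `t → 0⁺` gives the first-order condition
`h η* ≤ h ξ + L̃ ⟪η*, ξ - η*⟫`, i.e. the quadratic growth
`h η* + (L̃/2)‖η*‖² + (L̃/2)‖ξ - η*‖² ≤ h ξ + (L̃/2)‖ξ‖²`. Bounding `f (x + η*)` from above by the
descent inequality (with `L ≤ L̃`) and `f (x + ξ)` from below by the gradient inequality of the
convex function `f` yields the claim.
-/

open scoped RealInnerProductSpace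

open Set Filter Topology

lemma nonpos_of_forall_le_mul {a b : ℝ} (h : ∀ t ∈ Ioo (0 : ℝ) 1, a ≤ b * t) : a ≤ 0 := by
  have hlim : Tendsto (fun t => b * t) (𝓝[>] 0) (𝓝 0) := by
    simpa using ((continuous_const_mul b).tendsto 0).mono_left nhdsWithin_le_nhds
  exact ge_of_tendsto hlim (eventually_of_mem (Ioo_mem_nhdsGT one_pos) h)

lemma ConvexOn.add_fderiv_le {E : Type*} [NormedAddCommGroup E] [NormedSpace ℝ E] {f : E → ℝ}
    {f' : E →L[ℝ] ℝ} {x : E} (hf : ConvexOn ℝ univ f) (hfx : HasFDerivAt f f' x) (v : E) :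
    f x + f' v ≤ f (x + v) := by
  let ℓ : ℝ →ᵃ[ℝ] E := AffineMap.lineMap x (x + v)
  have hℓ : HasDerivAt (f ∘ ℓ) (f' v) 0 := by
    have hfx' : HasFDerivAt f f' (ℓ 0) := by simpa [ℓ] using hfx
    simpa [ℓ] using hfx'.comp_hasDerivAt (0 : ℝ) AffineMap.hasDerivAt_lineMap
  have := (hf.comp_affineMap ℓ).le_slope_of_hasDerivAt (mem_univ 0) (mem_univ 1) one_pos hℓ
  simp only [ℓ, slope_def_field, Function.comp_apply, AffineMap.lineMap_apply_one,
    AffineMap.lineMap_apply_zero, sub_zero, div_one] at this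
  linarith

variable {E : Type*} [NormedAddCommGroup E] [InnerProductSpace ℝ E]

lemma ConvexOn.le_add_inner_of_isMinOn {h : E → ℝ} (hh : ConvexOn ℝ univ h) {c : ℝ} {u : E}
    (hu : IsMinOn (fun y => h y + c / 2 * ‖y‖ ^ 2) univ u) (v : E) :
    h u ≤ h v + c * ⟪u, v - u⟫ := by
  suffices h u - h v - c * ⟪u, v - u⟫ ≤ 0 by linarith
  refine nonpos_of_forall_le_mul (b := c / 2 * ‖v - u‖ ^ 2) fun t ht => ?_
  have hconv : h (u + t • (v - u)) ≤ (1 - t) * h u + t * h v := by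
    have := hh.2 (mem_univ u) (mem_univ v) (sub_nonneg.2 ht.2.le) ht.1.le (by ring)
    rwa [show (1 - t) • u + t • v = u + t • (v - u) by module] at this
  have hmin := isMinOn_univ_iff.1 hu (u + t • (v - u))
  rw [norm_add_sq_real, inner_smul_right, norm_smul, Real.norm_of_nonneg ht.1.le] at hmin
  nlinarith [ht.1]

lemma ConvexOn.add_half_mul_norm_sq_le_of_isMinOn {h : E → ℝ} (hh : ConvexOn ℝ univ h) {c : ℝ}
    {u : E} (hu : IsMinOn (fun y => h y + c / 2 * ‖y‖ ^ 2) univ u) (v : E) :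
    h u + c / 2 * ‖u‖ ^ 2 + c / 2 * ‖v - u‖ ^ 2 ≤ h v + c / 2 * ‖v‖ ^ 2 := by
  have hv : ‖v‖ ^ 2 = ‖u‖ ^ 2 + 2 * ⟪u, v - u⟫ + ‖v - u‖ ^ 2 := by
    rw [← norm_add_sq_real, add_sub_cancel]
  rw [hv]
  linarith [hh.le_add_inner_of_isMinOn hu v]

/-- key descent comparison lemma (Euclidean specialization). -/
theorem stmt7 (n : ℕ) (f g : EuclideanSpace ℝ (Fin n) → ℝ)
    (f' : EuclideanSpace ℝ (Fin n) → EuclideanSpace ℝ (Fin n))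
    (hf' : ∀ x, HasGradientAt f (f' x) x)
    (hfconv : ConvexOn ℝ Set.univ f) (hgconv : ConvexOn ℝ Set.univ g)
    (L Ltil : ℝ) (hLL : L ≤ Ltil)
    (hsmooth : ∀ x η : EuclideanSpace ℝ (Fin n),
      f (x + η) ≤ f x + ⟪f' x, η⟫ + L / 2 * ‖η‖ ^ 2)
    (x ηstar : EuclideanSpace ℝ (Fin n))
    (hmin : ∀ η : EuclideanSpace ℝ (Fin n),
      ⟪f' x, ηstar⟫ + Ltil / 2 * ‖ηstar‖ ^ 2 + g (x + ηstar)
        ≤ ⟪f' x, η⟫ + Ltil / 2 * ‖η‖ ^ 2 + g (x + η)) :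
    ∀ ξ : EuclideanSpace ℝ (Fin n),
      f (x + ηstar) + g (x + ηstar)
        ≤ f (x + ξ) + g (x + ξ) + Ltil / 2 * (‖ξ‖ ^ 2 - ‖ξ - ηstar‖ ^ 2) := by
  intro ξ
  let h : EuclideanSpace ℝ (Fin n) → ℝ := fun η => ⟪f' x, η⟫ + g (x + η)
  have hconv : ConvexOn ℝ univ h :=
    ((innerₛₗ ℝ (f' x)).convexOn convex_univ).add (hgconv.translate_right x)
  have hgrowth := hconv.add_half_mul_norm_sq_le_of_isMinOn (c := Ltil) (u := ηstar)
    (isMinOn_univ_iff.2 fun η => by simp only [h]; linarith [hmin η]) ξ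
  have hlower : f x + ⟪f' x, ξ⟫ ≤ f (x + ξ) := by
    simpa using hfconv.add_fderiv_le (hf' x).hasFDerivAt ξ
  have hupper := hsmooth x ηstar
  have hL : L / 2 * ‖ηstar‖ ^ 2 ≤ Ltil / 2 * ‖ηstar‖ ^ 2 := by gcongr
  simp only [h] at hgrowth
  linarith
end

section
/- (Convergence of sequences from a KL-type recursion, $\theta \in [1/2, 1)$ case abstraction.) Let $(\Delta_k)_{k\ge 0}$ be a nonincreasing sequence of nonnegative reals such that for all sufficiently large $k$, $\Delta_k \le (\Delta_{k-1} - \Delta_k) + b_1 (\Delta_{k-1} - \Delta_k)^{\theta/(1-\theta)}$ for some constant $b_1 > 0$ and exponent $\theta \in [1/2, 1)$. Then there exist constants $C_r > 0$ and $d \in (0,1)$ such that $\Delta_k \le C_r d^k$ for all $k$. -/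
/-- abstract KL-type recursion, `θ ∈ [1/2, 1)`: a nonincreasing nonnegative
sequence satisfying `Δ_k ≤ (Δ_{k-1} - Δ_k) + b₁ (Δ_{k-1} - Δ_k)^{θ/(1-θ)}` for large `k`
converges R-linearly. -/
theorem stmt14 (Δ : ℕ → ℝ) (hnonneg : ∀ k, 0 ≤ Δ k) (hmono : ∀ k, Δ (k + 1) ≤ Δ k)
    (θ b1 : ℝ) (hθ : θ ∈ Set.Ico (1 / 2 : ℝ) 1) (hb1 : 0 < b1)
    (N : ℕ)
    (hrec : ∀ k ≥ N,
      Δ (k + 1) ≤ (Δ k - Δ (k + 1)) + b1 * (Δ k - Δ (k + 1)) ^ (θ / (1 - θ))) :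
    ∃ C : ℝ, 0 < C ∧ ∃ d : ℝ, d ∈ Set.Ioo (0 : ℝ) 1 ∧ ∀ k, Δ k ≤ C * d ^ k := by
  obtain ⟨hθ1, hθ2⟩ := hθ
  have h1θ : 0 < 1 - θ := by linarith
  set p := θ / (1 - θ) with hpdef
  have hp1 : 1 ≤ p := by
    rw [hpdef, le_div_iff₀ h1θ]; linarith
  have hΔ0 : ∀ k, Δ k ≤ Δ 0 := by
    intro k
    induction k with
    | zero => exact le_refl _
    | succ n ih => exact (hmono n).trans ih
  set M := max 1 ((Δ 0 + 1) ^ (p - 1)) with hMdef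
  have hM1 : (1 : ℝ) ≤ M := le_max_left _ _
  have key : ∀ e : ℝ, 0 ≤ e → e ≤ Δ 0 → e ^ p ≤ M * e := by
    intro e he hle
    rcases eq_or_lt_of_le he with h0 | h0
    · rw [← h0, Real.zero_rpow (by linarith : p ≠ 0), mul_zero]
    · have heq : e ^ p = e ^ (p - 1) * e ^ (1 : ℝ) := by
        rw [← Real.rpow_add h0]; norm_num
      rw [heq, Real.rpow_one]
      have h1 : e ^ (p - 1) ≤ (Δ 0 + 1) ^ (p - 1) :=
        Real.rpow_le_rpow he (by linarith) (by linarith)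
      have h2 : (Δ 0 + 1) ^ (p - 1) ≤ M := le_max_right _ _
      exact mul_le_mul_of_nonneg_right (h1.trans h2) he
  set A := 1 + b1 * M with hAdef
  have hA0 : 0 < A := by nlinarith
  set r := A / (1 + A) with hrdef
  have hr0 : 0 < r := by positivity
  have hr1 : r < 1 := by
    rw [hrdef, div_lt_one (by linarith)]; linarith
  have step : ∀ k, N ≤ k → Δ (k + 1) ≤ r * Δ k := by
    intro k hk
    have he : 0 ≤ Δ k - Δ (k + 1) := by linarith [hmono k]
    have hle : Δ k - Δ (k + 1) ≤ Δ 0 := by linarith [hnonneg (k + 1), hΔ0 k]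
    have h3 := (hrec k hk).trans
      (by nlinarith [key (Δ k - Δ (k + 1)) he hle] :
        (Δ k - Δ (k + 1)) + b1 * (Δ k - Δ (k + 1)) ^ p ≤ A * (Δ k - Δ (k + 1)))
    rw [hrdef, div_mul_eq_mul_div, le_div_iff₀ (by linarith : (0:ℝ) < 1 + A)]
    nlinarith
  have geom : ∀ n, Δ (N + n) ≤ r ^ n * Δ N := by
    intro n
    induction n with
    | zero => simp
    | succ m ih =>
      have := step (N + m) (Nat.le_add_right N m)
      calc Δ (N + (m + 1)) = Δ (N + m + 1) := by ring_nf
        _ ≤ r * Δ (N + m) := this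
        _ ≤ r * (r ^ m * Δ N) := by nlinarith
        _ = r ^ (m + 1) * Δ N := by ring
  have hrN : (0:ℝ) < r ^ N := pow_pos hr0 N
  have hC : 0 < (Δ 0 + 1) / r ^ N := div_pos (by linarith [hnonneg 0]) hrN
  refine ⟨(Δ 0 + 1) / r ^ N, hC, r, ⟨hr0, hr1⟩, ?_⟩
  intro k
  rcases le_or_gt N k with hk | hk
  · obtain ⟨n, rfl⟩ := Nat.exists_eq_add_of_le hk
    have h1 : Δ (N + n) ≤ r ^ n * (Δ 0 + 1) := by
      have := geom n
      nlinarith [hΔ0 N, pow_pos hr0 n]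
    have h2 : (Δ 0 + 1) / r ^ N * r ^ (N + n) = r ^ n * (Δ 0 + 1) := by
      rw [pow_add]; field_simp
    rw [h2]; exact h1
  · have h1 : r ^ k ≥ r ^ N := pow_le_pow_of_le_one hr0.le hr1.le hk.le
    have h2 : (Δ 0 + 1) / r ^ N * r ^ N = Δ 0 + 1 := div_mul_cancel₀ _ hrN.ne'
    have h3 : (Δ 0 + 1) / r ^ N * r ^ N ≤ (Δ 0 + 1) / r ^ N * r ^ k :=
      mul_le_mul_of_nonneg_left h1 hC.le
    have := hΔ0 k
    linarith
end

section
/- (Inverse differentiated polar retraction on the Stiefel manifold, verification.) Let $X \in \mathrm{St}(p,n)$, $\eta \in T_X\mathrm{St}(p,n)$, $Y = (X+\eta)(I_p+\eta^T\eta)^{-1/2}$, and suppose $M := Y^T(X+\eta)$ is invertible. Given $\zeta \in T_Y\mathrm{St}(p,n)$, set $P = (I_n - YY^T)\zeta M$ and let $A$ solve $X^TYA + AY^TX = [(Y^T\zeta)M + M(Y^T\zeta)]Y^TX - X^TP - P^TX$. Then $\xi := YA + P$ satisfies $X^T\xi + \xi^TX = 0$, i.e., $\xi \in T_X\mathrm{St}(p,n)$.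 -/
open Matrix

/-!
Write `W = XᵀY` and `S = BM + MB` with `B = Yᵀζ`; as `B` is skew and `M` symmetric, `S` is skew.
Subtracting the transpose of the Sylvester equation from itself shows that `D = A - Aᵀ - S`
solves the homogeneous Lyapunov equation `WD + DWᵀ = 0`. Once `D = 0`, i.e. `Aᵀ = A - S`,
the tangency defect `Xᵀξ + ξᵀX = WA + AᵀWᵀ + XᵀP + PᵀX` is the Sylvester equation itself.

Uniqueness: `M = Sq` and `W = (I + K) Sq⁻¹` with `K = Xᵀη` skew. Taking the trace of
`(WD + DWᵀ) Sq⁻¹ Dᵀ Sq⁻¹` kills the `K`-terms and leaves two nonnegative quadratic terms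
in `Sq⁻¹`, the second of which vanishes only for `D = 0`.
-/

namespace Matrix

section Square

variable {m : Type*} [Fintype m]

lemma trace_mul_eq_zero_of_transpose_eq_neg {K S : Matrix m m ℝ} (hK : Kᵀ = -K)
    (hS : Sᵀ = S) : (K * S).trace = 0 := by
  have h : (K * S).trace = -(K * S).trace := by
    nth_rewrite 1 [← trace_transpose]
    rw [transpose_mul, hK, hS, mul_neg, trace_neg, trace_mul_comm]
  linarith

lemma PosDef.eq_zero_of_trace_transpose_mul_mul_eq_zero {k : Type*} [Fintype k]
    {Q : Matrix m m ℝ} {G : Matrix m k ℝ} (hQ : Q.PosDef) (h : (Gᵀ * Q * G).trace = 0) :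
    G = 0 := by
  have hpsd : (Gᵀ * Q * G).PosSemidef := by
    simpa [conjTranspose_eq_transpose_of_trivial] using hQ.posSemidef.conjTranspose_mul_mul_same G
  have h0 : Gᵀ * Q * G = 0 := hpsd.trace_eq_zero_iff.mp h
  have hcol : ∀ j, Gᵀ j = 0 := fun j => by
    by_contra hv
    have hpos := hQ.dotProduct_mulVec_pos hv
    have hjj : (Gᵀ * Q * G) j j = star (Gᵀ j) ⬝ᵥ Q *ᵥ Gᵀ j := by
      rw [Matrix.mul_assoc]
      simp [mul_apply, mulVec, dotProduct]
    rw [← hjj, h0] at hpos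
    exact lt_irrefl _ hpos
  exact transpose_eq_zero.mp (funext hcol)

lemma eq_zero_of_lyapunov_eq_zero [DecidableEq m] {K Q D : Matrix m m ℝ} (hK : Kᵀ = -K)
    (hQ : Q.PosDef) (h : (1 + K) * Q * D + D * ((1 + K) * Q)ᵀ = 0) : D = 0 := by
  have hQs : Qᵀ = Q := (isHermitian_iff_isSymm.mp hQ.isHermitian).eq
  set F := Q * D
  set G := D * Q
  have hexp : ((1 + K) * Q * D + D * ((1 + K) * Q)ᵀ) * (Q * Dᵀ * Q)
      = F * Q * Fᵀ + K * (F * Q * Fᵀ) + G * Gᵀ * Q - G * K * Gᵀ * Q := by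
    simp only [F, G, transpose_mul, transpose_add, transpose_one, hK, hQs]
    noncomm_ring
  have hFQF : (F * Q * Fᵀ)ᵀ = F * Q * Fᵀ := by
    simp only [transpose_mul, transpose_transpose, hQs, Matrix.mul_assoc]
  have hGKG : (G * K * Gᵀ)ᵀ = -(G * K * Gᵀ) := by
    simp only [transpose_mul, transpose_transpose, hK]
    noncomm_ring
  have htrace : (F * Q * Fᵀ).trace + (Gᵀ * Q * G).trace = 0 := by
    have h0 : (((1 + K) * Q * D + D * ((1 + K) * Q)ᵀ) * (Q * Dᵀ * Q)).trace = 0 := by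
      rw [h, zero_mul, trace_zero]
    rwa [hexp, trace_sub, trace_add, trace_add, trace_mul_eq_zero_of_transpose_eq_neg hK hFQF,
      trace_mul_eq_zero_of_transpose_eq_neg hGKG hQs, Matrix.mul_assoc G, trace_mul_comm G,
      add_zero, sub_zero] at h0
  have hF : 0 ≤ (F * Q * Fᵀ).trace := by
    simpa [conjTranspose_eq_transpose_of_trivial] using
      (hQ.posSemidef.mul_mul_conjTranspose_same F).trace_nonneg
  have hG : 0 ≤ (Gᵀ * Q * G).trace := by
    simpa [conjTranspose_eq_transpose_of_trivial] using
      (hQ.posSemidef.conjTranspose_mul_mul_same G).trace_nonneg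
  have hG0 : G = 0 := hQ.eq_zero_of_trace_transpose_mul_mul_eq_zero (by linarith)
  exact hQ.isUnit.mul_left_eq_zero.mp hG0

end Square

variable {n p : Type*} [Fintype n]

lemma transpose_mul_add_transpose_mul_eq_zero_of_lyapunov [Fintype p] {R : Type*} [CommRing R]
    {X Y P : Matrix n p R} {A S : Matrix p p R} (hS : Sᵀ = -S)
    (hinj : ∀ D : Matrix p p R, Xᵀ * Y * D + D * (Xᵀ * Y)ᵀ = 0 → D = 0)
    (hA : Xᵀ * Y * A + A * (Yᵀ * X) = S * (Yᵀ * X) - Xᵀ * P - Pᵀ * X) :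
    Xᵀ * (Y * A + P) + (Y * A + P)ᵀ * X = 0 := by
  have hWT : (Xᵀ * Y)ᵀ = Yᵀ * X := by rw [transpose_mul, transpose_transpose]
  have hAT : Aᵀ * (Yᵀ * X) + Xᵀ * Y * Aᵀ = -(Xᵀ * Y * S) - Pᵀ * X - Xᵀ * P := by
    have h := congrArg transpose hA
    simp only [transpose_add, transpose_sub, transpose_mul, transpose_transpose, hS] at h
    linear_combination (norm := noncomm_ring) h
  have hD : A - Aᵀ - S = 0 := hinj _ (by
    rw [hWT]
    linear_combination (norm := noncomm_ring) hA - hAT)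
  have hAs : Aᵀ = A - S := by linear_combination (norm := noncomm_ring) -hD
  calc Xᵀ * (Y * A + P) + (Y * A + P)ᵀ * X
      = Xᵀ * Y * A + A * (Yᵀ * X) - (S * (Yᵀ * X) - Xᵀ * P - Pᵀ * X) := by
        simp only [transpose_add, transpose_mul, hAs, Matrix.mul_add, Matrix.add_mul,
          Matrix.sub_mul, Matrix.mul_assoc]
        abel
    _ = 0 := by rw [hA, sub_self]

lemma transpose_mul_self_add_of_transpose_mul_self_eq_one [DecidableEq p] {R : Type*}
    [CommRing R] {X η : Matrix n p R} (hX : Xᵀ * X = 1) (hη : Xᵀ * η + ηᵀ * X = 0) :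
    (X + η)ᵀ * (X + η) = 1 + ηᵀ * η := by
  rw [transpose_add, Matrix.add_mul, Matrix.mul_add, Matrix.mul_add, hX]
  linear_combination (norm := abel) hη

lemma transpose_mul_inv_mul_eq_of_posDef [Fintype p] [DecidableEq p] {Z : Matrix n p ℝ}
    {Sq : Matrix p p ℝ} (hSq : Sq.PosDef) (hZ : Zᵀ * Z = Sq * Sq) : (Z * Sq⁻¹)ᵀ * Z = Sq := by
  have hSqs : Sqᵀ = Sq := (isHermitian_iff_isSymm.mp hSq.isHermitian).eq
  rw [transpose_mul, transpose_nonsing_inv, hSqs, Matrix.mul_assoc, hZ, ← Matrix.mul_assoc,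
    nonsing_inv_mul _ ((isUnit_iff_isUnit_det _).mp hSq.isUnit), Matrix.one_mul]

end Matrix

theorem stmt18_general (n p : ℕ)
    (X η : Matrix (Fin n) (Fin p) ℝ) (hX : Xᵀ * X = 1) (hη : Xᵀ * η + ηᵀ * X = 0)
    (Sq : Matrix (Fin p) (Fin p) ℝ) (hSq : Sq * Sq = 1 + ηᵀ * η)
    (hSqpd : Sq.PosDef)
    (Y : Matrix (Fin n) (Fin p) ℝ) (hY : Y = (X + η) * Sq⁻¹)
    (M : Matrix (Fin p) (Fin p) ℝ) (hM : M = Yᵀ * (X + η))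
    (ζ : Matrix (Fin n) (Fin p) ℝ) (hζ : Yᵀ * ζ + ζᵀ * Y = 0)
    (P : Matrix (Fin n) (Fin p) ℝ)
    (A : Matrix (Fin p) (Fin p) ℝ)
    (hA : Xᵀ * Y * A + A * (Yᵀ * X)
        = ((Yᵀ * ζ) * M + M * (Yᵀ * ζ)) * (Yᵀ * X) - Xᵀ * P - Pᵀ * X) :
    Xᵀ * (Y * A + P) + (Y * A + P)ᵀ * X = 0 := by
  have hSqs : Sqᵀ = Sq := (isHermitian_iff_isSymm.mp hSqpd.isHermitian).eq
  have hMSq : M = Sq := by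
    rw [hM, hY]
    exact transpose_mul_inv_mul_eq_of_posDef hSqpd
      (by rw [transpose_mul_self_add_of_transpose_mul_self_eq_one hX hη, hSq])
  have hK : (Xᵀ * η)ᵀ = -(Xᵀ * η) := by
    rw [transpose_mul, transpose_transpose, eq_neg_of_add_eq_zero_right hη]
  have hB : (Yᵀ * ζ)ᵀ = -(Yᵀ * ζ) := by
    rw [transpose_mul, transpose_transpose, eq_neg_of_add_eq_zero_right hζ]
  have hW : Xᵀ * Y = (1 + Xᵀ * η) * Sq⁻¹ := by
    rw [hY, ← Matrix.mul_assoc, Matrix.mul_add, hX]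
  refine transpose_mul_add_transpose_mul_eq_zero_of_lyapunov ?_
    (fun D hD => eq_zero_of_lyapunov_eq_zero hK hSqpd.inv (hW ▸ hD)) hA
  generalize Yᵀ * ζ = B at hB ⊢
  rw [hMSq, transpose_add, transpose_mul, transpose_mul, hB, hSqs]
  noncomm_ring

/-- inverse differentiated polar retraction on the Stiefel manifold:
the vector `ξ = YA + P` built from the stated Sylvester equation is tangent at `X`. -/
theorem stmt18 (n p : ℕ)
    (X η : Matrix (Fin n) (Fin p) ℝ) (hX : Xᵀ * X = 1) (hη : Xᵀ * η + ηᵀ * X = 0)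
    (Sq : Matrix (Fin p) (Fin p) ℝ) (hSq : Sq * Sq = 1 + ηᵀ * η) (hSqs : Sqᵀ = Sq)
    (hSqpd : Sq.PosDef)
    (Y : Matrix (Fin n) (Fin p) ℝ) (hY : Y = (X + η) * Sq⁻¹)
    (M : Matrix (Fin p) (Fin p) ℝ) (hM : M = Yᵀ * (X + η)) (hMinv : IsUnit M)
    (ζ : Matrix (Fin n) (Fin p) ℝ) (hζ : Yᵀ * ζ + ζᵀ * Y = 0)
    (P : Matrix (Fin n) (Fin p) ℝ) (hP : P = (1 - Y * Yᵀ) * ζ * M)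
    (A : Matrix (Fin p) (Fin p) ℝ)
    (hA : Xᵀ * Y * A + A * (Yᵀ * X)
        = ((Yᵀ * ζ) * M + M * (Yᵀ * ζ)) * (Yᵀ * X) - Xᵀ * P - Pᵀ * X) :
    Xᵀ * (Y * A + P) + (Y * A + P)ᵀ * X = 0 :=
  stmt18_general n p X η hX hη Sq hSq hSqpd Y hY M hM ζ hζ P A hA
end
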